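/- arXiv:2303.09878 — 2 statements merged into one kernel-verified Lean document; each statement's English description precedes it below -/
import Mathlib

section
/- Let λ ≥ 2 and u₁ ≥ 2 be integers, let A ⊊ ℕ, let Λ = {λ₁, …, λ_m} ⊂ ℤ⁺ with 1 ≤ λ₁ < ⋯ < λ_m, λ̄ = (λ₁, …, λ_m), and suppose R_{A,λ̄}(n) = 1 for every nonnegative integer n. Let v ≥ 1 be an integer such that Λ ∩ [0, λ^{v u₁} − 1] = Λ_λ(u₁), A ∩ [0, λ^{v u₁} − 1] = A_λ(u₁, v), and λ^{v u₁} ∈ A. Then Λ ∩ [0, λ^{(v+1) u₁} − 1] = Λ_λ(u₁), A ∩ [0, λ^{(v+1) u₁} − 1] = A_λ(u₁, v+1), and λ^{(v+1) u₁} ∈ A ∪ Λ but λ^{(v+1) u₁} ∉ A ∩ Λ. -/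
/-- `Uprod u i = u 0 * u 1 * ⋯ * u (i-1)`, i.e. `U_i = u₁u₂⋯u_i` for the
0-indexed sequence `u`. -/
def Uprod (u : ℕ → ℕ) (i : ℕ) : ℕ := ∏ j ∈ Finset.range i, u j

/-- `S(u₁, v₁, …, u_{k−1}, v_{k−1}, u_k) =
{i₀ + i₁U₁V₁ + ⋯ + i_{k−1}U_{k−1}V_{k−1} : 0 ≤ i_h < u_{h+1}}` (0-indexed). -/
def Sset (u v : ℕ → ℕ) (k : ℕ) : Set ℕ :=
  {s | ∃ i : ℕ → ℕ, (∀ h < k, i h < u h) ∧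
    s = ∑ h ∈ Finset.range k, i h * (Uprod u h * Uprod v h)}

/-- `T(u₁, v₁, …, u_k, v_k) =
{j₀U₁ + j₁U₂V₁ + ⋯ + j_{k−1}U_kV_{k−1} : 0 ≤ j_h < v_{h+1}}` (0-indexed). -/
def Tset (u v : ℕ → ℕ) (k : ℕ) : Set ℕ :=
  {t | ∃ j : ℕ → ℕ, (∀ h < k, j h < v h) ∧
    t = ∑ h ∈ Finset.range k, j h * (Uprod u (h + 1) * Uprod v h)}

/-- `T(u₁, v₁, …, u_k, ∞)`: as `Tset` but with the last digit `j_{k-1}`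
unbounded. -/
def TsetInf (u v : ℕ → ℕ) (k : ℕ) : Set ℕ :=
  {t | ∃ j : ℕ → ℕ, (∀ h, h + 1 < k → j h < v h) ∧
    t = ∑ h ∈ Finset.range k, j h * (Uprod u (h + 1) * Uprod v h)}

/-- `A_λ(T) = {Σ_{t ∈ T} δ_t λ^t : 0 ≤ δ_t < λ, all but finitely many δ_t = 0}`. -/
def Aset (lam : ℕ) (T : Set ℕ) : Set ℕ :=
  {a | ∃ δ : ℕ →₀ ℕ, (∀ t, δ t < lam) ∧ (∀ t, δ t ≠ 0 → t ∈ T) ∧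
    a = δ.sum fun t d => d * lam ^ t}

/-- `R_{A,λ̄}(n) = |{(a₁,…,a_m) ∈ A^m : λ₁a₁ + ⋯ + λ_m a_m = n}|`. -/
noncomputable def R {m : ℕ} (A : Set ℕ) (lam : Fin m → ℕ) (n : ℕ) : ℕ :=
  Set.ncard {a : Fin m → ℕ | (∀ i, a i ∈ A) ∧ ∑ i, lam i * a i = n}

/-- `A_λ(u₁, v) = {Σ_{h=0}^{v−1} δ_h λ^{h u₁} : 0 ≤ δ_h < λ}`. -/
def AsetOne (lam u₁ v : ℕ) : Set ℕ :=
  {x | ∃ δ : ℕ → ℕ, (∀ h < v, δ h < lam) ∧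
    x = ∑ h ∈ Finset.range v, δ h * lam ^ (h * u₁)}


section Aux
open Finset


lemma dsum_lt (lam : ℕ) (hlam : 1 ≤ lam) :
    ∀ (K : ℕ) (d : ℕ → ℕ), (∀ p < K, d p < lam) →
      ∑ p ∈ range K, d p * lam ^ p < lam ^ K := by
  intro K
  induction K with
  | zero => intro d _; simp
  | succ K ih =>
    intro d hd
    rw [Finset.sum_range_succ]
    have h1 : ∑ p ∈ range K, d p * lam ^ p < lam ^ K :=
      ih d (fun p hp => hd p (hp.trans (Nat.lt_succ_self K)))
    have h2 : d K + 1 ≤ lam := hd K (Nat.lt_succ_self K)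
    calc ∑ p ∈ range K, d p * lam ^ p + d K * lam ^ K
        < lam ^ K + d K * lam ^ K := by omega
      _ = (d K + 1) * lam ^ K := by ring
      _ ≤ lam * lam ^ K := Nat.mul_le_mul_right _ h2
      _ = lam ^ (K + 1) := by ring

lemma dsum_digits (lam : ℕ) (hlam : 2 ≤ lam) :
    ∀ (K n : ℕ), n < lam ^ K → ∑ p ∈ range K, (n / lam ^ p % lam) * lam ^ p = n := by
  intro K
  induction K with
  | zero => intro n hn; simp at hn; simp [hn]
  | succ K ih =>
    intro n hn
    have hpos : 0 < lam ^ K := Nat.pow_pos (by omega)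
    have hmod : n % lam ^ K < lam ^ K := Nat.mod_lt _ hpos
    have ihm := ih (n % lam ^ K) hmod
    have hdig : ∀ p < K, n % lam ^ K / lam ^ p % lam = n / lam ^ p % lam := by
      intro p hp
      have h1 : lam ^ K = lam ^ p * lam ^ (K - p) := by rw [← pow_add]; congr 1; omega
      rw [h1, Nat.mod_mul_right_div_self]
      exact Nat.mod_mod_of_dvd _ (dvd_pow_self lam (by omega))
    rw [Finset.sum_range_succ]
    have hlo : ∑ p ∈ range K, (n / lam ^ p % lam) * lam ^ p = n % lam ^ K := by
      rw [← ihm]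
      exact Finset.sum_congr rfl (fun p hp => by rw [hdig p (mem_range.mp hp)])
    rw [hlo]
    have hdivlt : n / lam ^ K < lam := by
      apply Nat.div_lt_of_lt_mul
      rw [← pow_succ]
      exact hn
    rw [Nat.mod_eq_of_lt hdivlt, Nat.mod_add_div']

lemma dsum_digit_eq (lam : ℕ) (hlam : 2 ≤ lam) (K : ℕ) (d : ℕ → ℕ)
    (hd : ∀ p < K, d p < lam) (q : ℕ) (hq : q < K) :
    (∑ p ∈ range K, d p * lam ^ p) / lam ^ q % lam = d q := by
  have hsplit : ∑ p ∈ range K, d p * lam ^ p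
      = ∑ p ∈ range (q+1), d p * lam ^ p + ∑ p ∈ Ico (q+1) K, d p * lam ^ p :=
    (Finset.sum_range_add_sum_Ico _ (by omega)).symm
  have hIco : ∑ p ∈ Ico (q+1) K, d p * lam ^ p
      = lam ^ (q+1) * ∑ i ∈ range (K - (q+1)), d (q+1+i) * lam ^ i := by
    rw [Finset.sum_Ico_eq_sum_range, Finset.mul_sum]
    refine Finset.sum_congr rfl fun i _ => ?_
    rw [pow_add]; ring
  have key : ∑ p ∈ range K, d p * lam ^ p
      = (∑ p ∈ range q, d p * lam ^ p) + lam ^ q * (d q + lam * ∑ i ∈ range (K - (q+1)), d (q+1+i) * lam ^ i) := by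
    rw [hsplit, Finset.sum_range_succ, hIco]; ring
  rw [key]
  have hlow : ∑ p ∈ range q, d p * lam ^ p < lam ^ q :=
    dsum_lt lam (by omega) q d (fun p hp => hd p (by omega))
  rw [Nat.add_mul_div_left _ _ (pow_pos (by omega) q), Nat.div_eq_of_lt hlow, zero_add,
    Nat.add_mul_mod_self_left, Nat.mod_eq_of_lt (hd q hq)]

lemma dsum_reindex (lam u : ℕ) (hu : 0 < u) (w : ℕ) (δ : ℕ → ℕ → ℕ) :
    ∑ j ∈ range u, lam ^ j * ∑ h ∈ range w, δ j h * lam ^ (h * u)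
      = ∑ p ∈ range (w * u), δ (p % u) (p / u) * lam ^ p := by
  have h1 : ∀ j ∈ range u, lam ^ j * ∑ h ∈ range w, δ j h * lam ^ (h * u)
      = ∑ h ∈ range w, δ j h * lam ^ (h * u + j) := by
    intro j _
    rw [Finset.mul_sum]
    exact Finset.sum_congr rfl fun h _ => by rw [pow_add]; ring
  rw [Finset.sum_congr rfl h1, ← Finset.sum_product']
  apply Finset.sum_nbij' (i := fun (q : ℕ × ℕ) => q.2 * u + q.1) (j := fun p => (p % u, p / u))
  · rintro ⟨j, h⟩ hm
    simp only [Finset.mem_product, Finset.mem_range] at hm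
    simp only [Finset.mem_range]
    have h2 : (h + 1) * u ≤ w * u := Nat.mul_le_mul_right u (by omega)
    have h3 : h * u + j < (h + 1) * u := by rw [add_one_mul]; omega
    omega
  · intro p hp
    simp only [Finset.mem_range] at hp
    simp only [Finset.mem_product, Finset.mem_range]
    refine ⟨Nat.mod_lt _ hu, ?_⟩
    rw [Nat.div_lt_iff_lt_mul hu]
    omega
  · rintro ⟨j, h⟩ hm
    simp only [Finset.mem_product, Finset.mem_range] at hm
    have e1 : (h * u + j) % u = j := by
      rw [Nat.mul_comm h u, Nat.mul_add_mod, Nat.mod_eq_of_lt hm.1]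
    have e2 : (h * u + j) / u = h := by
      rw [Nat.mul_comm h u] at *; rw [Nat.mul_add_div hu, Nat.div_eq_of_lt hm.1, Nat.add_zero]
    simp [e1, e2]
  · intro p hp
    simp only []
    rw [Nat.mul_comm, Nat.div_add_mod]
  · rintro ⟨j, h⟩ hm
    simp only [Finset.mem_product, Finset.mem_range] at hm
    have e1 : (h * u + j) % u = j := by
      rw [Nat.mul_comm h u, Nat.mul_add_mod, Nat.mod_eq_of_lt hm.1]
    have e2 : (h * u + j) / u = h := by
      rw [Nat.mul_comm h u] at *; rw [Nat.mul_add_div hu, Nat.div_eq_of_lt hm.1, Nat.add_zero]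
    simp [e1, e2]
lemma aset_zero (lam u w : ℕ) (hlam : 1 ≤ lam) : 0 ∈ AsetOne lam u w :=
  ⟨fun _ => 0, fun _ _ => by dsimp only; omega, by simp⟩

lemma aset_small (lam u w : ℕ) (hw : 0 < w) (c : ℕ) (hc : c < lam) :
    c ∈ AsetOne lam u w := by
  refine ⟨fun h => if h = 0 then c else 0, fun h _ => by dsimp only; split <;> omega, ?_⟩
  rw [Finset.sum_eq_single_of_mem 0 (mem_range.mpr hw)]
  · simp
  · intro h _ hh
    simp [hh]

lemma aset_mono (lam u w : ℕ) (hlam : 1 ≤ lam) (x : ℕ) (hx : x ∈ AsetOne lam u w) :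
    x ∈ AsetOne lam u (w + 1) := by
  obtain ⟨δ, hδ, hxe⟩ := hx
  refine ⟨fun h => if h < w then δ h else 0, ?_, ?_⟩
  · intro h _
    by_cases hc : h < w
    · simpa [hc] using hδ h hc
    · simp [hc]; omega
  · rw [Finset.sum_range_succ]
    simp only [lt_irrefl, if_false, zero_mul, add_zero]
    rw [hxe]
    exact Finset.sum_congr rfl fun h hh => by simp [mem_range.mp hh]

lemma aset_split (lam u w : ℕ) (x : ℕ) :
    x ∈ AsetOne lam u (w + 1) ↔
      ∃ b ∈ AsetOne lam u w, ∃ d, d < lam ∧ x = b + d * lam ^ (w * u) := by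
  constructor
  · rintro ⟨δ, hδ, rfl⟩
    exact ⟨∑ h ∈ range w, δ h * lam ^ (h * u), ⟨δ, fun h hh => hδ h (by omega), rfl⟩,
      δ w, hδ w (by omega), by rw [Finset.sum_range_succ]⟩
  · rintro ⟨b, ⟨δ, hδ, rfl⟩, d, hd, rfl⟩
    refine ⟨fun h => if h < w then δ h else d, ?_, ?_⟩
    · intro h _
      by_cases hc : h < w
      · simpa [hc] using hδ h hc
      · simpa [hc] using hd
    · rw [Finset.sum_range_succ]
      simp only [lt_irrefl, if_false]
      congr 1
      exact Finset.sum_congr rfl fun h hh => by simp [mem_range.mp hh]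

lemma aset_sum_lt (lam u : ℕ) (hlam : 2 ≤ lam) (hu : 0 < u) (w : ℕ) (g : ℕ → ℕ)
    (hg : ∀ j < u, g j ∈ AsetOne lam u w) :
    ∑ j ∈ range u, lam ^ j * g j < lam ^ (w * u) := by
  have H : ∀ j, ∃ δ : ℕ → ℕ, (∀ h < w, δ h < lam) ∧
      (j < u → g j = ∑ h ∈ range w, δ h * lam ^ (h * u)) := by
    intro j
    by_cases hj : j < u
    · obtain ⟨δ, h1, h2⟩ := hg j hj
      exact ⟨δ, h1, fun _ => h2⟩
    · exact ⟨fun _ => 0, fun _ _ => by dsimp only; omega, fun hj' => absurd hj' hj⟩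
  choose δ hδ1 hδ2 using H
  have e1 : ∑ j ∈ range u, lam ^ j * g j
      = ∑ j ∈ range u, lam ^ j * ∑ h ∈ range w, δ j h * lam ^ (h * u) :=
    Finset.sum_congr rfl fun j hj => by rw [hδ2 j (mem_range.mp hj)]
  rw [e1, dsum_reindex lam u hu w δ]
  exact dsum_lt lam (by omega) _ _ (fun p hp => hδ1 _ _ (by
    rw [Nat.div_lt_iff_lt_mul hu]; exact hp))

lemma aset_lt (lam u : ℕ) (hlam : 2 ≤ lam) (hu : 0 < u) (w : ℕ) (x : ℕ)
    (hx : x ∈ AsetOne lam u w) : x < lam ^ (w * u) := by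
  have e : ∑ j ∈ range u, lam ^ j * (if j = 0 then x else 0) = x := by
    rw [Finset.sum_eq_single_of_mem 0 (mem_range.mpr hu)]
    · simp
    · intro h _ hh; simp [hh]
  calc x = ∑ j ∈ range u, lam ^ j * (if j = 0 then x else 0) := e.symm
    _ < lam ^ (w * u) := aset_sum_lt lam u hlam hu w _ (fun j _ => by
        split
        · next h => subst h; exact hx
        · exact aset_zero lam u w (by omega))

lemma aset_mul_lam_lt (lam u : ℕ) (hlam : 2 ≤ lam) (hu : 2 ≤ u) (w : ℕ) (b : ℕ)
    (hb : b ∈ AsetOne lam u w) : lam * b < lam ^ (w * u) := by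
  have e : ∑ j ∈ range u, lam ^ j * (if j = 1 then b else 0) = lam * b := by
    rw [Finset.sum_eq_single_of_mem 1 (mem_range.mpr (by omega))]
    · simp
    · intro h _ hh; simp [hh]
  calc lam * b = ∑ j ∈ range u, lam ^ j * (if j = 1 then b else 0) := e.symm
    _ < lam ^ (w * u) := aset_sum_lt lam u hlam (by omega) w _ (fun j _ => by
        split
        · next h => subst h; exact hb
        · exact aset_zero lam u w (by omega))

lemma aset_exist (lam u : ℕ) (hlam : 2 ≤ lam) (hu : 0 < u) (w n : ℕ)
    (hn : n < lam ^ (w * u)) :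
    ∃ g : ℕ → ℕ, (∀ j, g j ∈ AsetOne lam u w) ∧ ∑ j ∈ range u, lam ^ j * g j = n := by
  refine ⟨fun j => ∑ h ∈ range w, (n / lam ^ (h * u + j) % lam) * lam ^ (h * u),
    fun j => ⟨fun h => n / lam ^ (h * u + j) % lam,
      fun h _ => Nat.mod_lt _ (by omega), rfl⟩, ?_⟩
  rw [dsum_reindex lam u hu w (fun j h => n / lam ^ (h * u + j) % lam)]
  have e : ∀ p ∈ range (w * u), n / lam ^ (p / u * u + p % u) % lam * lam ^ p
      = n / lam ^ p % lam * lam ^ p := by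
    intro p _
    have : p / u * u + p % u = p := by
      rw [Nat.mul_comm, Nat.div_add_mod]
    rw [this]
  rw [Finset.sum_congr rfl e]
  exact dsum_digits lam hlam (w * u) n hn

lemma aset_inj (lam u : ℕ) (hlam : 2 ≤ lam) (hu : 0 < u) (w : ℕ) (g g' : ℕ → ℕ)
    (hg : ∀ j < u, g j ∈ AsetOne lam u w) (hg' : ∀ j < u, g' j ∈ AsetOne lam u w)
    (heq : ∑ j ∈ range u, lam ^ j * g j = ∑ j ∈ range u, lam ^ j * g' j) :
    ∀ j < u, g j = g' j := by
  have H : ∀ (f : ℕ → ℕ), (∀ j < u, f j ∈ AsetOne lam u w) → ∃ δ : ℕ → ℕ → ℕ,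
      (∀ j h, δ j h < lam) ∧ (∀ j < u, f j = ∑ h ∈ range w, δ j h * lam ^ (h * u)) := by
    intro f hf
    have H1 : ∀ j, ∃ δ : ℕ → ℕ, (∀ h, δ h < lam) ∧
        (j < u → f j = ∑ h ∈ range w, δ h * lam ^ (h * u)) := by
      intro j
      by_cases hj : j < u
      · obtain ⟨δ, h1, h2⟩ := hf j hj
        refine ⟨fun h => if h < w then δ h else 0, ?_, fun _ => ?_⟩
        · intro h
          by_cases hc : h < w
          · simpa [hc] using h1 h hc
          · simp [hc]; omega
        · rw [h2]
          exact Finset.sum_congr rfl fun h hh => by simp [mem_range.mp hh]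
      · exact ⟨fun _ => 0, fun _ => by dsimp only; omega, fun hj' => absurd hj' hj⟩
    choose δ h1 h2 using H1
    exact ⟨δ, h1, h2⟩
  obtain ⟨δ, hδ1, hδ2⟩ := H g hg
  obtain ⟨ε, hε1, hε2⟩ := H g' hg'
  have e1 : ∑ j ∈ range u, lam ^ j * g j = ∑ p ∈ range (w * u), δ (p % u) (p / u) * lam ^ p := by
    rw [← dsum_reindex lam u hu w δ]
    exact Finset.sum_congr rfl fun j hj => by rw [hδ2 j (mem_range.mp hj)]
  have e2 : ∑ j ∈ range u, lam ^ j * g' j = ∑ p ∈ range (w * u), ε (p % u) (p / u) * lam ^ p := by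
    rw [← dsum_reindex lam u hu w ε]
    exact Finset.sum_congr rfl fun j hj => by rw [hε2 j (mem_range.mp hj)]
  have key : ∀ j < u, ∀ h < w, δ j h = ε j h := by
    intro j hj h hh
    have hq : h * u + j < w * u := by
      have h2 : (h + 1) * u ≤ w * u := Nat.mul_le_mul_right u (by omega)
      have h3 : h * u + j < (h + 1) * u := by rw [add_one_mul]; omega
      omega
    have d1 := dsum_digit_eq lam hlam (w * u) (fun p => δ (p % u) (p / u))
      (fun p _ => hδ1 _ _) _ hq
    have d2 := dsum_digit_eq lam hlam (w * u) (fun p => ε (p % u) (p / u))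
      (fun p _ => hε1 _ _) _ hq
    have em : (h * u + j) % u = j := by
      rw [Nat.mul_comm h u, Nat.mul_add_mod, Nat.mod_eq_of_lt hj]
    have ed : (h * u + j) / u = h := by
      rw [Nat.mul_comm h u, Nat.mul_add_div hu, Nat.div_eq_of_lt hj, Nat.add_zero]
    simp only [em, ed] at d1 d2
    rw [← d1, ← d2, ← e1, ← e2, heq]
  intro j hj
  rw [hδ2 j hj, hε2 j hj]
  exact Finset.sum_congr rfl fun h hh => by rw [key j hj h (mem_range.mp hh)]
def mkT (m u : ℕ) (E : ℕ → Fin m) (g : ℕ → ℕ) : Fin m → ℕ :=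
  fun k => ∑ i ∈ Finset.range u, if k = E i then g i else 0

lemma mkT_ne {m u : ℕ} {E : ℕ → Fin m} {g : ℕ → ℕ} {k : Fin m}
    (hk : ∀ i < u, k ≠ E i) : mkT m u E g k = 0 :=
  Finset.sum_eq_zero fun i hi => if_neg (hk i (mem_range.mp hi))

lemma mkT_eq {m u : ℕ} {E : ℕ → Fin m} {g : ℕ → ℕ}
    (hEinj : ∀ i < u, ∀ i' < u, E i = E i' → i = i') {i₀ : ℕ} (hi₀ : i₀ < u) :
    mkT m u E g (E i₀) = g i₀ := by
  rw [mkT, Finset.sum_eq_single_of_mem i₀ (mem_range.mpr hi₀)]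
  · rw [if_pos rfl]
  · intro i hi hne
    exact if_neg (fun h => hne (hEinj i (mem_range.mp hi) i₀ hi₀ h.symm))

lemma mkT_sum {m u : ℕ} (lamt : Fin m → ℕ) (E : ℕ → Fin m) (g : ℕ → ℕ) :
    ∑ k, lamt k * mkT m u E g k = ∑ i ∈ range u, lamt (E i) * g i := by
  unfold mkT
  have e1 : ∀ k : Fin m, lamt k * ∑ i ∈ range u, (if k = E i then g i else 0)
      = ∑ i ∈ range u, (if k = E i then lamt k * g i else 0) := by
    intro k
    rw [Finset.mul_sum]
    exact Finset.sum_congr rfl fun i _ => by split <;> simp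
  rw [Finset.sum_congr rfl fun k _ => e1 k, Finset.sum_comm]
  refine Finset.sum_congr rfl fun i _ => ?_
  rw [Finset.sum_ite_eq' Finset.univ (E i) (fun k => lamt k * g i)]
  simp

lemma mkT_memA {m u : ℕ} {A : Set ℕ} {E : ℕ → Fin m} {g : ℕ → ℕ}
    (hEinj : ∀ i < u, ∀ i' < u, E i = E i' → i = i')
    (h0 : (0 : ℕ) ∈ A) (hg : ∀ i < u, g i ∈ A) (k : Fin m) : mkT m u E g k ∈ A := by
  by_cases hk2 : ∀ i < u, k ≠ E i
  · rw [mkT_ne hk2]; exact h0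
  · push_neg at hk2
    obtain ⟨i, hi, he⟩ := hk2
    rw [he, mkT_eq hEinj hi]
    exact hg i hi

lemma sum_update {m : ℕ} (lamt : Fin m → ℕ) (f : Fin m → ℕ) (k₀ : Fin m) (w : ℕ)
    (hf0 : f k₀ = 0) :
    ∑ k, lamt k * Function.update f k₀ w k = lamt k₀ * w + ∑ k, lamt k * f k := by
  have e : (fun k => lamt k * Function.update f k₀ w k)
      = Function.update (fun k => lamt k * f k) k₀ (lamt k₀ * w) := by
    funext k
    by_cases hk : k = k₀
    · subst hk; simp
    · simp [Function.update_of_ne hk]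
  rw [e, Finset.sum_update_of_mem (Finset.mem_univ k₀)]
  have e2 : ∑ k, lamt k * f k = lamt k₀ * f k₀ + ∑ k ∈ Finset.univ \ {k₀}, lamt k * f k := by
    rw [← Finset.erase_eq, ← Finset.add_sum_erase Finset.univ _ (Finset.mem_univ k₀)]
  rw [e2, hf0]
  ring

lemma R_one_inj {m : ℕ} {A : Set ℕ} {lamt : Fin m → ℕ} (hR : ∀ n, R A lamt n = 1)
    {a b : Fin m → ℕ} (ha : ∀ i, a i ∈ A) (hb : ∀ i, b i ∈ A)
    (hab : ∑ i, lamt i * a i = ∑ i, lamt i * b i) : a = b := by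
  obtain ⟨x, hx⟩ := Set.ncard_eq_one.mp (hR (∑ i, lamt i * b i))
  have h1 : a ∈ {a : Fin m → ℕ | (∀ i, a i ∈ A) ∧ ∑ i, lamt i * a i = ∑ i, lamt i * b i} :=
    ⟨ha, hab⟩
  have h2 : b ∈ {a : Fin m → ℕ | (∀ i, a i ∈ A) ∧ ∑ i, lamt i * a i = ∑ i, lamt i * b i} :=
    ⟨hb, rfl⟩
  rw [hx] at h1 h2
  rw [Set.mem_singleton_iff.mp h1, Set.mem_singleton_iff.mp h2]

lemma R_one_surj {m : ℕ} {A : Set ℕ} {lamt : Fin m → ℕ} (hR : ∀ n, R A lamt n = 1)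
    (n : ℕ) : ∃ a : Fin m → ℕ, (∀ i, a i ∈ A) ∧ ∑ i, lamt i * a i = n := by
  obtain ⟨x, hx⟩ := Set.ncard_eq_one.mp (hR n)
  have : x ∈ {a : Fin m → ℕ | (∀ i, a i ∈ A) ∧ ∑ i, lamt i * a i = n} := by
    rw [hx]; exact Set.mem_singleton x
  exact ⟨x, this⟩

lemma div_carry (d lam : ℕ) (hd : 2 ≤ d) (hdl : d < lam) :
    ∃ wt s, 1 ≤ wt ∧ wt < lam ∧ s < d ∧ d * wt = lam + s := by
  have hm : lam % d < d := Nat.mod_lt _ (by omega)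
  have he : d * (lam / d) + lam % d = lam := Nat.div_add_mod lam d
  have hq1 : 1 ≤ lam / d := (Nat.one_le_div_iff (by omega)).mpr (by omega)
  have hql : lam / d ≤ lam / 2 := Nat.div_le_div_left (by omega) (by omega)
  have hl2 : lam / 2 + 1 < lam := by omega
  rcases Nat.eq_zero_or_pos (lam % d) with h | h
  · exact ⟨lam / d, 0, hq1, by omega, by omega, by omega⟩
  · refine ⟨lam / d + 1, d - lam % d, by omega, by omega, by omega, ?_⟩
    rw [Nat.mul_succ]
    omega

end Aux

theorem stmt13 (lam u₁ : ℕ) (hlam : 2 ≤ lam) (hu₁ : 2 ≤ u₁)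
    (A : Set ℕ) (hA : A ≠ Set.univ)
    (m : ℕ) (lamt : Fin m → ℕ) (hpos : ∀ i, 1 ≤ lamt i) (hmono : StrictMono lamt)
    (hR : ∀ n : ℕ, R A lamt n = 1)
    (v : ℕ) (hv : 1 ≤ v)
    (hΛ : Set.range lamt ∩ Set.Iio (lam ^ (v * u₁))
        = {x : ℕ | ∃ i < u₁, x = lam ^ i})
    (hAeq : A ∩ Set.Iio (lam ^ (v * u₁)) = AsetOne lam u₁ v)
    (hmem : lam ^ (v * u₁) ∈ A) :
    Set.range lamt ∩ Set.Iio (lam ^ ((v + 1) * u₁))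
        = {x : ℕ | ∃ i < u₁, x = lam ^ i} ∧
    A ∩ Set.Iio (lam ^ ((v + 1) * u₁)) = AsetOne lam u₁ (v + 1) ∧
    lam ^ ((v + 1) * u₁) ∈ A ∪ Set.range lamt ∧
    lam ^ ((v + 1) * u₁) ∉ A ∩ Set.range lamt := by
  classical
  open Finset in
  have hu0 : 0 < u₁ := by omega
  have hNpos : 0 < lam ^ (v * u₁) := pow_pos (by omega) _
  have hNM : lam ^ (v * u₁) < lam ^ ((v + 1) * u₁) := by
    apply Nat.pow_lt_pow_right (by omega)
    have : (v + 1) * u₁ = v * u₁ + u₁ := by ring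
    omega
  have hBA : ∀ x ∈ AsetOne lam u₁ v, x ∈ A := by
    intro x hx
    have hx2 : x ∈ A ∩ Set.Iio (lam ^ (v * u₁)) := by rw [hAeq]; exact hx
    exact hx2.1
  have hABs : ∀ x, x < lam ^ (v * u₁) → x ∈ A → x ∈ AsetOne lam u₁ v := by
    intro x h1 h2
    rw [← hAeq]; exact ⟨h2, h1⟩
  have h0A : (0 : ℕ) ∈ A := hBA 0 (aset_zero lam u₁ v (by omega))
  have h1A : (1 : ℕ) ∈ A := hBA 1 (aset_small lam u₁ v (by omega) 1 (by omega))
  have hpowlt : ∀ i < u₁, lam ^ i < lam ^ (v * u₁) := by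
    intro i hi
    apply Nat.pow_lt_pow_right (by omega)
    have : u₁ ≤ v * u₁ := Nat.le_mul_of_pos_left u₁ (by omega)
    omega
  have hpow_mem : ∀ i < u₁, ∃ k, lamt k = lam ^ i := by
    intro i hi
    have hx : lam ^ i ∈ Set.range lamt ∩ Set.Iio (lam ^ (v * u₁)) := by
      rw [hΛ]; exact ⟨i, hi, rfl⟩
    exact hx.1
  have hEex : ∀ i : ℕ, ∃ k : Fin m, (i < u₁ → lamt k = lam ^ i) := by
    intro i
    by_cases hi : i < u₁
    · obtain ⟨k, hk⟩ := hpow_mem i hi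
      exact ⟨k, fun _ => hk⟩
    · obtain ⟨k, _⟩ := hpow_mem 0 (by omega)
      exact ⟨k, fun h => absurd h hi⟩
  choose E hE using hEex
  have hEinj : ∀ i < u₁, ∀ i' < u₁, E i = E i' → i = i' := by
    intro i hi i' hi' h
    have h2 : lam ^ i = lam ^ i' := by rw [← hE i hi, ← hE i' hi', h]
    exact Nat.pow_right_injective hlam h2
  have mkT_sum' : ∀ g : ℕ → ℕ,
      ∑ k, lamt k * mkT m u₁ E g k = ∑ i ∈ range u₁, lam ^ i * g i := by
    intro g
    rw [mkT_sum lamt E g]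
    exact Finset.sum_congr rfl fun i hi => by rw [hE i (mem_range.mp hi)]
  have sum_single0 : ∀ x : ℕ,
      ∑ i ∈ range u₁, lam ^ i * (if i = 0 then x else 0) = x := by
    intro x
    rw [Finset.sum_eq_single_of_mem 0 (mem_range.mpr hu0)]
    · simp
    · intro i _ hi; simp [hi]
  have sum_single01 : ∀ x y : ℕ,
      ∑ i ∈ range u₁, lam ^ i * (if i = 0 then x else if i = 1 then y else 0)
        = x + lam * y := by
    intro x y
    have hsp : ∑ i ∈ range u₁, lam ^ i * (if i = 0 then x else if i = 1 then y else 0)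
        = ∑ i ∈ range 2, lam ^ i * (if i = 0 then x else if i = 1 then y else 0)
          + ∑ i ∈ Ico 2 u₁, lam ^ i * (if i = 0 then x else if i = 1 then y else 0) :=
      (Finset.sum_range_add_sum_Ico _ (by omega)).symm
    rw [hsp, Finset.sum_range_succ, Finset.sum_range_one]
    rw [Finset.sum_eq_zero (fun i hi => by
      have := (Finset.mem_Ico.mp hi).1
      rw [if_neg (by omega), if_neg (by omega), mul_zero])]
    simp [pow_one]
  have sum_zero : ∑ i ∈ range u₁, lam ^ i * (0 : ℕ) = 0 := by simp
  -- the fundamental collision tool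
  have collide : ∀ (n₀ : ℕ) (k₀ : Fin m), lamt k₀ = n₀ → (∀ i < u₁, k₀ ≠ E i) →
      ∀ (wt : ℕ) (g₁ g₂ : ℕ → ℕ), wt ∈ A → (∀ i < u₁, g₁ i ∈ A) → (∀ i < u₁, g₂ i ∈ A) →
        n₀ * wt + ∑ i ∈ range u₁, lam ^ i * g₁ i = ∑ i ∈ range u₁, lam ^ i * g₂ i →
        wt = 0 := by
    intro n₀ k₀ hk₀ hk₀ne wt g₁ g₂ hwt hg₁ hg₂ hsum
    have h1 : ∀ k, Function.update (mkT m u₁ E g₁) k₀ wt k ∈ A := by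
      intro k
      by_cases hk : k = k₀
      · subst hk; rw [Function.update_self]; exact hwt
      · rw [Function.update_of_ne hk]; exact mkT_memA hEinj h0A hg₁ k
    have h2 : ∀ k, mkT m u₁ E g₂ k ∈ A := mkT_memA hEinj h0A hg₂
    have hs1 : ∑ k, lamt k * Function.update (mkT m u₁ E g₁) k₀ wt k
        = n₀ * wt + ∑ i ∈ range u₁, lam ^ i * g₁ i := by
      rw [sum_update lamt _ k₀ wt (mkT_ne hk₀ne), mkT_sum' g₁, hk₀]
    have heqt := R_one_inj hR h1 h2 (by rw [hs1, mkT_sum' g₂]; exact hsum)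
    have hev := congrFun heqt k₀
    rw [Function.update_self, mkT_ne hk₀ne] at hev
    exact hev
  have hGIioN : AsetOne lam u₁ (v + 1) ∩ Set.Iio (lam ^ (v * u₁)) = AsetOne lam u₁ v := by
    ext x
    constructor
    · rintro ⟨hxG, hxlt⟩
      obtain ⟨b, hb, d, hd, rfl⟩ := (aset_split lam u₁ v x).mp hxG
      rcases Nat.eq_zero_or_pos d with h0 | h1
      · simpa [h0] using hb
      · exfalso
        have : lam ^ (v * u₁) ≤ d * lam ^ (v * u₁) := Nat.le_mul_of_pos_left _ h1
        have hxlt' : b + d * lam ^ (v * u₁) < lam ^ (v * u₁) := hxlt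
        omega
    · intro hx
      exact ⟨aset_mono lam u₁ v (by omega) x hx, aset_lt lam u₁ hlam hu0 v x hx⟩
  have step : ∀ n, lam ^ (v * u₁) ≤ n → n < lam ^ ((v + 1) * u₁) →
      A ∩ Set.Iio n = AsetOne lam u₁ (v + 1) ∩ Set.Iio n →
      Set.range lamt ∩ Set.Iio n = {x : ℕ | ∃ i < u₁, x = lam ^ i} →
      ((n ∈ A ↔ n ∈ AsetOne lam u₁ (v + 1)) ∧ n ∉ Set.range lamt) := by
    intro n hNn hnM hQA hQΛ
    have hn1 : 1 ≤ n := by omega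
    have dGA : ∀ x, x < n → x ∈ AsetOne lam u₁ (v + 1) → x ∈ A := by
      intro x h1 h2
      have hx : x ∈ AsetOne lam u₁ (v + 1) ∩ Set.Iio n := ⟨h2, h1⟩
      rw [← hQA] at hx
      exact hx.1
    have dAG : ∀ x, x < n → x ∈ A → x ∈ AsetOne lam u₁ (v + 1) := by
      intro x h1 h2
      have hx : x ∈ A ∩ Set.Iio n := ⟨h2, h1⟩
      rw [hQA] at hx
      exact hx.1
    have dΛ : ∀ k : Fin m, (∀ i < u₁, k ≠ E i) → n ≤ lamt k := by
      intro k hk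
      by_contra hlt
      have hx : lamt k ∈ Set.range lamt ∩ Set.Iio n := ⟨⟨k, rfl⟩, Set.mem_Iio.mpr (by omega)⟩
      rw [hQΛ] at hx
      obtain ⟨i, hi, he⟩ := hx
      exact hk i hi (hmono.injective (he.trans (hE i hi).symm))
    have hkne : ∀ k : Fin m, n ≤ lamt k → ∀ i < u₁, k ≠ E i := by
      intro k hkn i hi he
      rw [he, hE i hi] at hkn
      have := hpowlt i hi
      omega
    -- decomposition of n into parts all smaller than n, when n ∉ G
    have hdecomp : n ∉ AsetOne lam u₁ (v + 1) → ∃ g : ℕ → ℕ,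
        (∀ j, g j ∈ AsetOne lam u₁ (v + 1)) ∧ (∀ j < u₁, g j < n) ∧
        ∑ j ∈ range u₁, lam ^ j * g j = n := by
      intro hnG
      obtain ⟨g, hgG, hgsum⟩ := aset_exist lam u₁ hlam hu0 (v + 1) n hnM
      refine ⟨g, hgG, ?_, hgsum⟩
      have hle : ∀ j < u₁, lam ^ j * g j ≤ n := by
        intro j hj
        rw [← hgsum]
        exact Finset.single_le_sum (f := fun j => lam ^ j * g j)
          (fun _ _ => Nat.zero_le _) (mem_range.mpr hj)
      intro j hj
      rcases Nat.eq_zero_or_pos j with h0 | h1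
      · subst h0
        have h2 := hle 0 hu0
        rw [pow_zero, one_mul] at h2
        rcases lt_or_eq_of_le h2 with h | h
        · exact h
        · exfalso
          apply hnG
          rw [← h]
          exact hgG 0
      · have h2 := hle j hj
        have h3 : lam ≤ lam ^ j := by
          calc lam = lam ^ 1 := (pow_one lam).symm
            _ ≤ lam ^ j := Nat.pow_le_pow_right (by omega) h1
        have h4 : 2 * g j ≤ lam ^ j * g j := Nat.mul_le_mul_right _ (by omega)
        omega
    have notΛ : n ∉ Set.range lamt := by
      rintro ⟨k₀, hk₀⟩
      have hk₀ne : ∀ i < u₁, k₀ ≠ E i := hkne k₀ (le_of_eq hk₀.symm)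
      by_cases hnG : n ∈ AsetOne lam u₁ (v + 1)
      · obtain ⟨b, hb, d, hd, hne⟩ := (aset_split lam u₁ v n).mp hnG
        have hblt : b < lam ^ (v * u₁) := aset_lt lam u₁ hlam hu0 v b hb
        have hd1 : 1 ≤ d := by
          by_contra h
          have h0 : d = 0 := by omega
          rw [h0, zero_mul, add_zero] at hne
          omega
        by_cases hb0 : b = 0
        · subst hb0
          rw [zero_add] at hne
          by_cases hd2 : d = 1
          · -- n = N ∈ A : direct collision
            rw [hd2, one_mul] at hne
            have hcomp : ∀ i, i < u₁ → (if i = 0 then lam ^ (v * u₁) else 0) ∈ A := by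
              intro i _
              split
              · exact hmem
              · exact h0A
            have hsum : n * 1 + ∑ i ∈ range u₁, lam ^ i * (fun _ => (0:ℕ)) i
                = ∑ i ∈ range u₁, lam ^ i * (if i = 0 then lam ^ (v * u₁) else 0) := by
              rw [sum_single0]
              simp [hne]
            have hc := collide n k₀ hk₀ hk₀ne 1 (fun _ => 0)
              (fun j => if j = 0 then lam ^ (v * u₁) else 0) h1A (fun _ _ => h0A)
              (fun i hi => hcomp i hi) hsum
            exact one_ne_zero hc
          · -- d ≥ 2 : carry trick with weight
            obtain ⟨wt, s, hwt1, hwtlam, hsd, hdw⟩ := div_carry d lam (by omega) (by omega)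
            have hcomp : ∀ i, i < u₁ →
                (if i = 0 then s * lam ^ (v * u₁) else if i = 1 then lam ^ (v * u₁) else 0) ∈ A := by
              intro i _
              split
              · apply dGA
                · rw [hne]
                  exact (Nat.mul_lt_mul_right hNpos).mpr hsd
                · exact (aset_split lam u₁ v _).mpr
                    ⟨0, aset_zero lam u₁ v (by omega), s, by omega, by rw [zero_add]⟩
              · split
                · apply dGA
                  · rw [hne]
                    have h9 : 1 * lam ^ (v * u₁) < d * lam ^ (v * u₁) :=
                      (Nat.mul_lt_mul_right hNpos).mpr (by omega)
                    omega
                  · exact (aset_split lam u₁ v _).mpr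
                      ⟨0, aset_zero lam u₁ v (by omega), 1, by omega, by rw [zero_add, one_mul]⟩
                · exact h0A
            have hsum : n * wt + ∑ i ∈ range u₁, lam ^ i * (fun _ => (0:ℕ)) i
                = ∑ i ∈ range u₁, lam ^ i *
                  (if i = 0 then s * lam ^ (v * u₁) else if i = 1 then lam ^ (v * u₁) else 0) := by
              rw [sum_single01]
              have h8 : ∑ i ∈ range u₁, lam ^ i * (fun _ => (0:ℕ)) i = 0 := by simp
              rw [h8, hne, add_zero]
              calc d * lam ^ (v * u₁) * wt = d * wt * lam ^ (v * u₁) := by ring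
                _ = (lam + s) * lam ^ (v * u₁) := by rw [hdw]
                _ = s * lam ^ (v * u₁) + lam * lam ^ (v * u₁) := by ring
            have hc := collide n k₀ hk₀ hk₀ne wt (fun _ => 0)
              (fun j => if j = 0 then s * lam ^ (v * u₁) else if j = 1 then lam ^ (v * u₁) else 0)
              (hBA wt (aset_small lam u₁ v (by omega) wt hwtlam))
              (fun _ _ => h0A) (fun i hi => hcomp i hi) hsum
            omega
        · -- b ≠ 0 : carry trick in the low part
          have hlamb : lam * b < lam ^ (v * u₁) := aset_mul_lam_lt lam u₁ hlam hu₁ v b hb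
          obtain ⟨g₁, hg₁G, hg₁sum⟩ := aset_exist lam u₁ hlam hu0 v ((lam - 1) * b)
            (by
              have h7 : (lam - 1) * b < lam * b :=
                (Nat.mul_lt_mul_right (show 0 < b by omega)).mpr (by omega)
              omega)
          have hcomp : ∀ i, i < u₁ →
              (if i = 0 then d * lam ^ (v * u₁) else if i = 1 then b else 0) ∈ A := by
            intro i _
            split
            · apply dGA
              · omega
              · exact (aset_split lam u₁ v _).mpr
                  ⟨0, aset_zero lam u₁ v (by omega), d, hd, by rw [zero_add]⟩
            · split
              · exact hBA b hb
              · exact h0A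
          have hsum : n * 1 + ∑ i ∈ range u₁, lam ^ i * g₁ i
              = ∑ i ∈ range u₁, lam ^ i *
                (if i = 0 then d * lam ^ (v * u₁) else if i = 1 then b else 0) := by
            rw [hg₁sum, sum_single01, hne]
            have h5 : b + (lam - 1) * b = lam * b := by
              calc b + (lam - 1) * b = (1 + (lam - 1)) * b := by ring
                _ = lam * b := by congr 1; omega
            calc (b + d * lam ^ (v * u₁)) * 1 + (lam - 1) * b
                = d * lam ^ (v * u₁) + (b + (lam - 1) * b) := by ring
              _ = d * lam ^ (v * u₁) + lam * b := by rw [h5]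
          have hc := collide n k₀ hk₀ hk₀ne 1 g₁
            (fun j => if j = 0 then d * lam ^ (v * u₁) else if j = 1 then b else 0)
            h1A (fun i _ => hBA _ (hg₁G i)) (fun i hi => hcomp i hi) hsum
          exact one_ne_zero hc
      · -- n ∉ G : decompose n with small parts
        obtain ⟨g, hgG, hglt, hgsum⟩ := hdecomp hnG
        have hsum : n * 1 + ∑ i ∈ range u₁, lam ^ i * (fun _ => (0:ℕ)) i
            = ∑ i ∈ range u₁, lam ^ i * g i := by
          have h8 : ∑ i ∈ range u₁, lam ^ i * (fun _ => (0:ℕ)) i = 0 := by simp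
          rw [h8, hgsum]
          omega
        have hc := collide n k₀ hk₀ hk₀ne 1 (fun _ => 0) g h1A (fun _ _ => h0A)
          (fun i hi => dGA _ (hglt i hi) (hgG i)) hsum
        exact one_ne_zero hc
    refine ⟨⟨?_, ?_⟩, notΛ⟩
    · -- n ∈ A → n ∈ G
      intro hnA
      by_contra hnG
      obtain ⟨g, hgG, hglt, hgsum⟩ := hdecomp hnG
      have hcomp : ∀ i, i < u₁ → (if i = 0 then n else 0) ∈ A := by
        intro i _
        split
        · exact hnA
        · exact h0A
      have h1 : ∀ k, mkT m u₁ E (fun j => if j = 0 then n else 0) k ∈ A :=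
        mkT_memA hEinj h0A (fun i hi => hcomp i hi)
      have h2 : ∀ k, mkT m u₁ E g k ∈ A :=
        mkT_memA hEinj h0A (fun i hi => dGA _ (hglt i hi) (hgG i))
      have heqt := R_one_inj hR h1 h2 (by rw [mkT_sum', mkT_sum', sum_single0, hgsum])
      have hev := congrFun heqt (E 0)
      rw [mkT_eq hEinj hu0, mkT_eq hEinj hu0] at hev
      simp at hev
      have := hglt 0 hu0
      omega
    · -- n ∈ G → n ∈ A
      intro hnG
      obtain ⟨a, haA, hasum⟩ := R_one_surj hR n
      have hbig : ∀ k : Fin m, (∀ i < u₁, k ≠ E i) → a k = 0 := by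
        intro k hk
        by_contra h0
        have h1 : 1 ≤ a k := by omega
        have h2 : lamt k * a k ≤ n := by
          rw [← hasum]
          exact Finset.single_le_sum (f := fun k => lamt k * a k)
            (fun _ _ => Nat.zero_le _) (Finset.mem_univ k)
        have h3 : n ≤ lamt k := dΛ k hk
        have h4 : lamt k ≤ lamt k * a k := Nat.le_mul_of_pos_right _ h1
        exact notΛ ⟨k, by omega⟩
      have hsum2 : ∑ i ∈ range u₁, lam ^ i * a (E i) = n := by
        rw [← hasum]
        have e1 : ∑ k, lamt k * a k = ∑ k ∈ (range u₁).image E, lamt k * a k := by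
          symm
          apply Finset.sum_subset (Finset.subset_univ _)
          intro k _ hk
          have hk2 : ∀ i < u₁, k ≠ E i := by
            intro i hi he
            exact hk (Finset.mem_image.mpr ⟨i, mem_range.mpr hi, he.symm⟩)
          rw [hbig k hk2, mul_zero]
        rw [e1, Finset.sum_image (fun i hi i' hi' h =>
          hEinj i (mem_range.mp hi) i' (mem_range.mp hi') h)]
        exact Finset.sum_congr rfl fun i hi => by rw [hE i (mem_range.mp hi)]
      by_cases hg0 : a (E 0) = n
      · rw [← hg0]
        exact haA (E 0)
      · exfalso
        have hle : ∀ j < u₁, lam ^ j * a (E j) ≤ n := by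
          intro j hj
          rw [← hsum2]
          exact Finset.single_le_sum (f := fun j => lam ^ j * a (E j))
            (fun _ _ => Nat.zero_le _) (mem_range.mpr hj)
        have hlt : ∀ j < u₁, a (E j) < n := by
          intro j hj
          rcases Nat.eq_zero_or_pos j with h0 | h1
          · subst h0
            have h2 := hle 0 hu0
            rw [pow_zero, one_mul] at h2
            omega
          · have h2 := hle j hj
            have h3 : lam ≤ lam ^ j := by
              calc lam = lam ^ 1 := (pow_one lam).symm
                _ ≤ lam ^ j := Nat.pow_le_pow_right (by omega) h1
            have h4 : 2 * a (E j) ≤ lam ^ j * a (E j) := Nat.mul_le_mul_right _ (by omega)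
            omega
        have hinj := aset_inj lam u₁ hlam hu0 (v + 1) (fun j => a (E j))
          (fun j => if j = 0 then n else 0)
          (fun j hj => dAG _ (hlt j hj) (haA (E j)))
          (fun j hj => by
            by_cases hj0 : j = 0
            · simpa [hj0] using hnG
            · simp only [hj0, if_false]
              exact aset_zero lam u₁ (v + 1) (by omega))
          (by rw [hsum2, sum_single0])
        have h9 := hinj 0 hu0
        simp at h9
        exact hg0 h9
  have main : ∀ n, lam ^ (v * u₁) ≤ n → n ≤ lam ^ ((v + 1) * u₁) →
      A ∩ Set.Iio n = AsetOne lam u₁ (v + 1) ∩ Set.Iio n ∧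
      Set.range lamt ∩ Set.Iio n = {x : ℕ | ∃ i < u₁, x = lam ^ i} := by
    intro n hn
    induction n, hn using Nat.le_induction with
    | base =>
      intro _
      exact ⟨hAeq.trans hGIioN.symm, hΛ⟩
    | succ n hn ih =>
      intro hn1M
      obtain ⟨ihA, ihΛ⟩ := ih (by omega)
      obtain ⟨hiff, hnotΛ⟩ := step n hn (by omega) ihA ihΛ
      constructor
      · ext x
        simp only [Set.mem_inter_iff, Set.mem_Iio]
        constructor
        · rintro ⟨hxA, hx⟩
          rcases (by omega : x < n ∨ x = n) with h | h
          · have hx2 : x ∈ A ∩ Set.Iio n := ⟨hxA, h⟩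
            rw [ihA] at hx2
            exact ⟨hx2.1, hx⟩
          · subst h
            exact ⟨hiff.mp hxA, hx⟩
        · rintro ⟨hxG, hx⟩
          rcases (by omega : x < n ∨ x = n) with h | h
          · have hx2 : x ∈ AsetOne lam u₁ (v + 1) ∩ Set.Iio n := ⟨hxG, h⟩
            rw [← ihA] at hx2
            exact ⟨hx2.1, hx⟩
          · subst h
            exact ⟨hiff.mpr hxG, hx⟩
      · ext x
        simp only [Set.mem_inter_iff, Set.mem_Iio, Set.mem_setOf_eq]
        constructor
        · rintro ⟨hxr, hx⟩
          rcases (by omega : x < n ∨ x = n) with h | h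
          · have hx2 : x ∈ Set.range lamt ∩ Set.Iio n := ⟨hxr, h⟩
            rw [ihΛ] at hx2
            exact hx2
          · subst h
            exact absurd hxr hnotΛ
        · rintro ⟨i, hi, rfl⟩
          obtain ⟨k, hk⟩ := hpow_mem i hi
          have := hpowlt i hi
          exact ⟨⟨k, hk⟩, by omega⟩
  obtain ⟨QA, QΛ⟩ := main (lam ^ ((v + 1) * u₁)) (le_of_lt hNM) le_rfl
  have QA' : A ∩ Set.Iio (lam ^ ((v + 1) * u₁)) = AsetOne lam u₁ (v + 1) := by
    rw [QA]
    ext x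
    exact ⟨fun h => h.1, fun h => ⟨h, aset_lt lam u₁ hlam hu0 (v + 1) x h⟩⟩
  refine ⟨QΛ, QA', ?_, ?_⟩
  · -- M ∈ A ∪ range
    obtain ⟨a, haA, hasum⟩ := R_one_surj hR (lam ^ ((v + 1) * u₁))
    by_cases hbig : ∃ k : Fin m, (∀ i < u₁, k ≠ E i) ∧ a k ≠ 0
    · obtain ⟨k, hk, h0⟩ := hbig
      have h2 : lamt k * a k ≤ lam ^ ((v + 1) * u₁) := by
        rw [← hasum]
        exact Finset.single_le_sum (f := fun k => lamt k * a k)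
          (fun _ _ => Nat.zero_le _) (Finset.mem_univ k)
      have h4 : lam ^ ((v + 1) * u₁) ≤ lamt k := by
        by_contra hlt
        have hx : lamt k ∈ Set.range lamt ∩ Set.Iio (lam ^ ((v + 1) * u₁)) :=
          ⟨⟨k, rfl⟩, Set.mem_Iio.mpr (by omega)⟩
        rw [QΛ] at hx
        obtain ⟨i, hi, he⟩ := hx
        exact hk i hi (hmono.injective (he.trans (hE i hi).symm))
      have h5 : lamt k ≤ lamt k * a k := Nat.le_mul_of_pos_right _ (by omega)
      exact Or.inr ⟨k, by omega⟩
    · push_neg at hbig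
      have hbig' : ∀ k : Fin m, (∀ i < u₁, k ≠ E i) → a k = 0 := by
        intro k hk
        by_contra h0
        exact h0 (hbig k hk)
      have hsum2 : ∑ i ∈ range u₁, lam ^ i * a (E i) = lam ^ ((v + 1) * u₁) := by
        rw [← hasum]
        have e1 : ∑ k, lamt k * a k = ∑ k ∈ (range u₁).image E, lamt k * a k := by
          symm
          apply Finset.sum_subset (Finset.subset_univ _)
          intro k _ hk
          have hk2 : ∀ i < u₁, k ≠ E i := by
            intro i hi he
            exact hk (Finset.mem_image.mpr ⟨i, mem_range.mpr hi, he.symm⟩)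
          rw [hbig' k hk2, mul_zero]
        rw [e1, Finset.sum_image (fun i hi i' hi' h =>
          hEinj i (mem_range.mp hi) i' (mem_range.mp hi') h)]
        exact Finset.sum_congr rfl fun i hi => by rw [hE i (mem_range.mp hi)]
      by_cases hg0 : a (E 0) = lam ^ ((v + 1) * u₁)
      · exact Or.inl (by rw [← hg0]; exact haA (E 0))
      · exfalso
        have hle : ∀ j < u₁, lam ^ j * a (E j) ≤ lam ^ ((v + 1) * u₁) := by
          intro j hj
          rw [← hsum2]
          exact Finset.single_le_sum (f := fun j => lam ^ j * a (E j))
            (fun _ _ => Nat.zero_le _) (mem_range.mpr hj)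
        have hlt : ∀ j < u₁, a (E j) < lam ^ ((v + 1) * u₁) := by
          intro j hj
          rcases Nat.eq_zero_or_pos j with hj0 | hj1
          · subst hj0
            have h2 := hle 0 hu0
            rw [pow_zero, one_mul] at h2
            omega
          · have h2 := hle j hj
            have h3 : lam ≤ lam ^ j := by
              calc lam = lam ^ 1 := (pow_one lam).symm
                _ ≤ lam ^ j := Nat.pow_le_pow_right (by omega) hj1
            have h4 : 2 * a (E j) ≤ lam ^ j * a (E j) := Nat.mul_le_mul_right _ (by omega)
            omega
        have hG : ∀ j < u₁, a (E j) ∈ AsetOne lam u₁ (v + 1) := by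
          intro j hj
          have hx : a (E j) ∈ A ∩ Set.Iio (lam ^ ((v + 1) * u₁)) := ⟨haA (E j), hlt j hj⟩
          rw [QA'] at hx
          exact hx
        have h6 : ∑ j ∈ range u₁, lam ^ j * a (E j) < lam ^ ((v + 1) * u₁) :=
          aset_sum_lt lam u₁ hlam hu0 (v + 1) (fun j => a (E j)) hG
        omega
  · -- M ∉ A ∩ range
    rintro ⟨hMA, k₀, hk₀⟩
    have hk₀ne : ∀ i < u₁, k₀ ≠ E i := by
      intro i hi he
      rw [he, hE i hi] at hk₀
      have h1 := hpowlt i hi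
      omega
    have hcomp : ∀ i, i < u₁ → (if i = 0 then lam ^ ((v + 1) * u₁) else 0) ∈ A := by
      intro i _
      split
      · exact hMA
      · exact h0A
    have h1 : ∀ k, Function.update (mkT m u₁ E (fun _ => 0)) k₀ 1 k ∈ A := by
      intro k
      by_cases hk : k = k₀
      · subst hk; rw [Function.update_self]; exact h1A
      · rw [Function.update_of_ne hk]
        exact mkT_memA hEinj h0A (fun _ _ => h0A) k
    have h2 : ∀ k, mkT m u₁ E (fun j => if j = 0 then lam ^ ((v + 1) * u₁) else 0) k ∈ A :=
      mkT_memA hEinj h0A (fun i hi => hcomp i hi)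
    have hs1 : ∑ k, lamt k * Function.update (mkT m u₁ E (fun _ => 0)) k₀ 1 k
        = lam ^ ((v + 1) * u₁) := by
      rw [sum_update lamt _ k₀ 1 (mkT_ne hk₀ne), mkT_sum', hk₀]
      simp
    have heqt := R_one_inj hR h1 h2 (by rw [hs1, mkT_sum', sum_single0])
    have hev := congrFun heqt k₀
    rw [Function.update_self, mkT_ne hk₀ne] at hev
    exact one_ne_zero hev
end

section
/- Let λ ≥ 2 and u₁, v₁, u₂, v₂, …, u_k, v_k ≥ 2 be integers, and let A = A_λ(u₁, v₁, …, u_k, v_k) = {a₁, …, a_f} with a₁ < a₂ < ⋯ < a_f and Λ_λ(u₁, v₁, …, u_{k−1}, v_{k−1}, u_k) = {λ₁, …, λ_m} with λ₁ < ⋯ < λ_m. Then the map (a^{(1)}, …, a^{(m)}) ↦ λ₁a^{(1)} + ⋯ + λ_m a^{(m)} is a bijection from A^m onto the set of integers {0, 1, …, λ^{U_k V_k} − 1}. -/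
namespace Stmt15aux

/- ============ base-lam digit lemmas ============ -/

lemma sum_digits_lt (lam N : ℕ) (hlam : 1 ≤ lam) (d : ℕ → ℕ) (hd : ∀ p < N, d p < lam) :
    ∑ p ∈ Finset.range N, d p * lam ^ p < lam ^ N := by
  induction N with
  | zero => simpa using hlam
  | succ N ih =>
    rw [Finset.sum_range_succ, pow_succ]
    have h1 : ∑ p ∈ Finset.range N, d p * lam ^ p < lam ^ N :=
      ih (fun p hp => hd p (hp.trans (Nat.lt_succ_self _)))
    have h2 : d N * lam ^ N ≤ (lam - 1) * lam ^ N :=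
      Nat.mul_le_mul_right _ (Nat.le_pred_of_lt (hd N (Nat.lt_succ_self _)))
    calc ∑ p ∈ Finset.range N, d p * lam ^ p + d N * lam ^ N
        < lam ^ N + (lam - 1) * lam ^ N := Nat.add_lt_add_of_lt_of_le h1 h2
      _ = (1 + (lam - 1)) * lam ^ N := by ring
      _ = lam ^ N * lam := by rw [Nat.add_sub_cancel' hlam]; ring

lemma digits_unique (lam : ℕ) (hlam : 2 ≤ lam) :
    ∀ N (d d' : ℕ → ℕ), (∀ p < N, d p < lam) → (∀ p < N, d' p < lam) →
    (∑ p ∈ Finset.range N, d p * lam ^ p = ∑ p ∈ Finset.range N, d' p * lam ^ p) →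
    ∀ p < N, d p = d' p := by
  intro N
  induction N with
  | zero => intro d d' _ _ _ p hp; omega
  | succ N ih =>
    intro d d' hd hd' heq p hp
    rw [Finset.sum_range_succ', Finset.sum_range_succ'] at heq
    simp only [pow_zero, mul_one] at heq
    have key : ∀ (f : ℕ → ℕ), ∑ p ∈ Finset.range N, f (p+1) * lam ^ (p+1)
        = lam * ∑ p ∈ Finset.range N, f (p+1) * lam ^ p := by
      intro f; rw [Finset.mul_sum]; apply Finset.sum_congr rfl; intro x _; ring
    rw [key d, key d'] at heq
    set A := ∑ p ∈ Finset.range N, d (p+1) * lam ^ p with hA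
    set A' := ∑ p ∈ Finset.range N, d' (p+1) * lam ^ p with hA'
    have h0 : d 0 = d' 0 := by
      have e1 : (lam * A + d 0) % lam = d 0 := by
        rw [Nat.mul_add_mod]; exact Nat.mod_eq_of_lt (hd 0 (by omega))
      have e2 : (lam * A' + d' 0) % lam = d' 0 := by
        rw [Nat.mul_add_mod]; exact Nat.mod_eq_of_lt (hd' 0 (by omega))
      rw [← e1, ← e2, heq]
    have hAA : A = A' := by
      have : lam * A = lam * A' := by omega
      exact Nat.eq_of_mul_eq_mul_left (by omega) this
    match p with
    | 0 => exact h0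
    | q + 1 =>
      exact ih (fun p => d (p+1)) (fun p => d' (p+1))
        (fun p hp => hd (p+1) (by omega)) (fun p hp => hd' (p+1) (by omega)) hAA q (by omega)

lemma digits_exist (lam : ℕ) (hlam : 2 ≤ lam) :
    ∀ N n, n < lam ^ N → n = ∑ p ∈ Finset.range N, (n / lam ^ p % lam) * lam ^ p := by
  intro N
  induction N with
  | zero =>
    intro n hn
    rw [pow_zero] at hn
    simpa using (by omega : n = 0)
  | succ N ih =>
    intro n hn
    rw [Finset.sum_range_succ']
    simp only [pow_zero, mul_one, Nat.div_one]
    have key : ∑ p ∈ Finset.range N, (n / lam ^ (p+1) % lam) * lam ^ (p+1)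
        = lam * ∑ p ∈ Finset.range N, ((n / lam) / lam ^ p % lam) * lam ^ p := by
      rw [Finset.mul_sum]; apply Finset.sum_congr rfl; intro x _
      rw [pow_succ', Nat.div_div_eq_div_mul]; ring_nf
    rw [key]
    have hdiv : n / lam < lam ^ N := by
      rw [Nat.div_lt_iff_lt_mul (by omega)]
      calc n < lam ^ (N+1) := hn
        _ = lam ^ N * lam := pow_succ lam N
    rw [← ih (n / lam) hdiv]
    exact (Nat.div_add_mod n lam).symm

/- ============ fiberwise lemmas ============ -/

variable {ι : Type*} [DecidableEq ι]

omit [DecidableEq ι] in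
lemma sum_fiber_eq (lam : ℕ) (B : Finset ι) (e : ι → ℕ) (N : ℕ)
    (he : ∀ x ∈ B, e x < N) (f : ι → ℕ) :
    ∑ x ∈ B, f x * lam ^ (e x)
      = ∑ p ∈ Finset.range N, (∑ x ∈ B.filter (fun x => e x = p), f x) * lam ^ p := by
  rw [← Finset.sum_fiberwise_of_maps_to (g := e) (t := Finset.range N)
    (fun x hx => Finset.mem_range.mpr (he x hx)) (fun x => f x * lam ^ (e x))]
  apply Finset.sum_congr rfl
  intro p _
  rw [Finset.sum_mul]
  apply Finset.sum_congr rfl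
  intro x hx
  rw [(Finset.mem_filter.mp hx).2]

omit [DecidableEq ι] in
lemma fiber_singleton (B : Finset ι) (e : ι → ℕ)
    (heinj : ∀ x ∈ B, ∀ y ∈ B, e x = e y → x = y) {x : ι} (hx : x ∈ B) :
    B.filter (fun y => e y = e x) = {x} := by
  ext y
  simp only [Finset.mem_filter, Finset.mem_singleton]
  constructor
  · rintro ⟨hy, hey⟩; exact heinj y hy x hx hey
  · rintro rfl; exact ⟨hx, rfl⟩

omit [DecidableEq ι] in
lemma fiber_lt (lam : ℕ) (hlam : 1 ≤ lam) (B : Finset ι) (e : ι → ℕ)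
    (heinj : ∀ x ∈ B, ∀ y ∈ B, e x = e y → x = y) (f : ι → ℕ)
    (hf : ∀ x ∈ B, f x < lam) (p : ℕ) :
    ∑ x ∈ B.filter (fun x => e x = p), f x < lam := by
  by_cases h : (B.filter (fun x => e x = p)).Nonempty
  · obtain ⟨x, hx⟩ := h
    obtain ⟨hxB, hxe⟩ := Finset.mem_filter.mp hx
    have : B.filter (fun y => e y = p) = {x} := by
      rw [← hxe]; exact fiber_singleton B e heinj hxB
    rw [this, Finset.sum_singleton]
    exact hf x hxB
  · rw [Finset.not_nonempty_iff_eq_empty.mp h, Finset.sum_empty]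
    omega

/- ============ S/T structure ============ -/

lemma Uprod_succ (u : ℕ → ℕ) (k : ℕ) : Uprod u (k+1) = Uprod u k * u k :=
  Finset.prod_range_succ u k

lemma mem_Sset_zero (u v : ℕ → ℕ) {s : ℕ} : s ∈ Sset u v 0 ↔ s = 0 := by
  constructor
  · rintro ⟨i, _, rfl⟩; simp
  · rintro rfl; exact ⟨fun _ => 0, by simp⟩

lemma mem_Tset_zero (u v : ℕ → ℕ) {t : ℕ} : t ∈ Tset u v 0 ↔ t = 0 := by
  constructor
  · rintro ⟨j, _, rfl⟩; simp
  · rintro rfl; exact ⟨fun _ => 0, by simp⟩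

lemma mem_Sset_succ (u v : ℕ → ℕ) (k : ℕ) {s : ℕ} :
    s ∈ Sset u v (k+1) ↔
      ∃ s₀ ∈ Sset u v k, ∃ c < u k, s = s₀ + c * (Uprod u k * Uprod v k) := by
  constructor
  · rintro ⟨i, hi, rfl⟩
    refine ⟨∑ h ∈ Finset.range k, i h * (Uprod u h * Uprod v h),
      ⟨i, fun h hh => hi h (by omega), rfl⟩, i k, hi k (by omega), ?_⟩
    rw [Finset.sum_range_succ]
  · rintro ⟨s₀, ⟨i, hi, rfl⟩, c, hc, rfl⟩
    refine ⟨fun h => if h = k then c else i h, ?_, ?_⟩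
    · intro h hh
      by_cases hhk : h = k
      · simpa [hhk] using hc
      · simpa [hhk] using hi h (by omega)
    · rw [Finset.sum_range_succ]
      simp only [if_pos rfl]
      congr 1
      apply Finset.sum_congr rfl
      intro x hx
      rw [if_neg (by simp at hx; omega)]

lemma mem_Tset_succ (u v : ℕ → ℕ) (k : ℕ) {t : ℕ} :
    t ∈ Tset u v (k+1) ↔
      ∃ t₀ ∈ Tset u v k, ∃ c < v k, t = t₀ + c * (Uprod u (k+1) * Uprod v k) := by
  constructor
  · rintro ⟨j, hj, rfl⟩
    refine ⟨∑ h ∈ Finset.range k, j h * (Uprod u (h+1) * Uprod v h),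
      ⟨j, fun h hh => hj h (by omega), rfl⟩, j k, hj k (by omega), ?_⟩
    rw [Finset.sum_range_succ]
  · rintro ⟨t₀, ⟨j, hj, rfl⟩, c, hc, rfl⟩
    refine ⟨fun h => if h = k then c else j h, ?_, ?_⟩
    · intro h hh
      by_cases hhk : h = k
      · simpa [hhk] using hc
      · simpa [hhk] using hj h (by omega)
    · rw [Finset.sum_range_succ]
      simp only [if_pos rfl]
      congr 1
      apply Finset.sum_congr rfl
      intro x hx
      rw [if_neg (by simp at hx; omega)]

lemma euclid_unique {x x' y y' N : ℕ} (hN : 0 < N) (hx : x < N) (hx' : x' < N)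
    (h : x + y * N = x' + y' * N) : x = x' ∧ y = y' := by
  have h1 : (x + y * N) % N = x := by
    rw [Nat.add_mul_mod_self_right, Nat.mod_eq_of_lt hx]
  have h2 : (x' + y' * N) % N = x' := by
    rw [Nat.add_mul_mod_self_right, Nat.mod_eq_of_lt hx']
  have h3 : (x + y * N) / N = y := by
    rw [Nat.add_mul_div_right _ _ hN, Nat.div_eq_of_lt hx]; omega
  have h4 : (x' + y' * N) / N = y' := by
    rw [Nat.add_mul_div_right _ _ hN, Nat.div_eq_of_lt hx']; omega
  constructor
  · rw [← h1, ← h2, h]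
  · rw [← h3, ← h4, h]

lemma core (u v : ℕ → ℕ) :
    ∀ k, (∀ h < k, 1 ≤ u h) → (∀ h < k, 1 ≤ v h) →
    (∀ s ∈ Sset u v k, ∀ t ∈ Tset u v k, s + t < Uprod u k * Uprod v k) ∧
    (∀ p < Uprod u k * Uprod v k, ∃ s ∈ Sset u v k, ∃ t ∈ Tset u v k, p = s + t) ∧
    (∀ s ∈ Sset u v k, ∀ t ∈ Tset u v k, ∀ s' ∈ Sset u v k, ∀ t' ∈ Tset u v k,
      s + t = s' + t' → s = s' ∧ t = t') := by
  intro k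
  induction k with
  | zero =>
    intro _ _
    refine ⟨?_, ?_, ?_⟩
    · intro s hs t ht
      rw [mem_Sset_zero] at hs; rw [mem_Tset_zero] at ht
      subst hs; subst ht; simp [Uprod]
    · intro p hp
      simp only [Uprod, Finset.range_zero, Finset.prod_empty, mul_one] at hp
      exact ⟨0, (mem_Sset_zero u v).mpr rfl, 0, (mem_Tset_zero u v).mpr rfl, by omega⟩
    · intro s hs t ht s' hs' t' ht' _
      rw [mem_Sset_zero] at hs hs'; rw [mem_Tset_zero] at ht ht'
      subst hs; subst ht; subst hs'; subst ht'; exact ⟨rfl, rfl⟩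
  | succ k ih =>
    intro hu hv
    obtain ⟨iha, ihb, ihc⟩ := ih (fun h hh => hu h (by omega)) (fun h hh => hv h (by omega))
    have huk : 1 ≤ u k := hu k (by omega)
    have hvk : 1 ≤ v k := hv k (by omega)
    have hNpos : 0 < Uprod u k * Uprod v k := by
      apply Nat.mul_pos <;>
      · apply Finset.prod_pos
        intro h hh
        simp only [Finset.mem_range] at hh
        first
        | exact hu h (by omega)
        | exact hv h (by omega)
    set N := Uprod u k * Uprod v k with hNdef
    have hN1 : Uprod u (k+1) * Uprod v (k+1) = N * (u k * v k) := by
      rw [Uprod_succ, Uprod_succ]; ring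
    have hM : Uprod u (k+1) * Uprod v k = u k * N := by
      rw [Uprod_succ]; ring
    refine ⟨?_, ?_, ?_⟩
    · intro s hs t ht
      rw [mem_Sset_succ] at hs
      rw [mem_Tset_succ] at ht
      obtain ⟨s₀, hs₀, c, hc, rfl⟩ := hs
      obtain ⟨t₀, ht₀, j, hj, rfl⟩ := ht
      have h1 : s₀ + t₀ < N := iha s₀ hs₀ t₀ ht₀
      rw [hN1, hM]
      have hcN : (c + 1) * N ≤ u k * N := Nat.mul_le_mul_right _ (by omega)
      have h2 : s₀ + c * N + (t₀ + j * (u k * N)) + 1 ≤ (j + 1) * (u k * N) := by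
        calc s₀ + c * N + (t₀ + j * (u k * N)) + 1
            ≤ N + c * N + j * (u k * N) := by omega
          _ = (c + 1) * N + j * (u k * N) := by ring
          _ ≤ u k * N + j * (u k * N) := by omega
          _ = (j + 1) * (u k * N) := by ring
      calc s₀ + c * N + (t₀ + j * (u k * N)) < (j + 1) * (u k * N) := by omega
        _ ≤ v k * (u k * N) := Nat.mul_le_mul_right _ (by omega)
        _ = N * (u k * v k) := by ring
    · intro p hp
      rw [hN1] at hp
      have hr : p % N < N := Nat.mod_lt _ hNpos
      have hq : p / N < u k * v k := by
        rw [Nat.div_lt_iff_lt_mul hNpos]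
        calc p < N * (u k * v k) := hp
          _ = u k * v k * N := by ring
      obtain ⟨s₀, hs₀, t₀, ht₀, hrst⟩ := ihb (p % N) hr
      set q := p / N with hqdef
      have hc : q % u k < u k := Nat.mod_lt _ (by omega)
      have hj : q / u k < v k := by
        rw [Nat.div_lt_iff_lt_mul (by omega)]
        calc q < u k * v k := hq
          _ = v k * u k := by ring
      refine ⟨s₀ + (q % u k) * N, (mem_Sset_succ u v k).mpr ⟨s₀, hs₀, q % u k, hc, rfl⟩,
        t₀ + (q / u k) * (Uprod u (k+1) * Uprod v k),
        (mem_Tset_succ u v k).mpr ⟨t₀, ht₀, q / u k, hj, rfl⟩, ?_⟩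
      rw [hM]
      have e1 : p = p % N + q * N := by
        rw [hqdef]; exact (Nat.mod_add_div' p N).symm
      have e2 : q = q % u k + (q / u k) * u k := (Nat.mod_add_div' q (u k)).symm
      calc p = p % N + q * N := e1
        _ = (s₀ + t₀) + (q % u k + (q / u k) * u k) * N := by rw [← hrst, ← e2]
        _ = s₀ + q % u k * N + (t₀ + q / u k * (u k * N)) := by ring
    · intro s hs t ht s' hs' t' ht' heq
      rw [mem_Sset_succ] at hs hs'
      rw [mem_Tset_succ] at ht ht'
      obtain ⟨s₀, hs₀, c, hc, rfl⟩ := hs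
      obtain ⟨t₀, ht₀, j, hj, rfl⟩ := ht
      obtain ⟨s₀', hs₀', c', hc', rfl⟩ := hs'
      obtain ⟨t₀', ht₀', j', hj', rfl⟩ := ht'
      rw [hM] at heq
      have e1 : s₀ + c * N + (t₀ + j * (u k * N))
          = (s₀ + t₀) + (c + j * u k) * N := by ring
      have e1' : s₀' + c' * N + (t₀' + j' * (u k * N))
          = (s₀' + t₀') + (c' + j' * u k) * N := by ring
      rw [e1, e1'] at heq
      obtain ⟨hx, hy⟩ := euclid_unique hNpos (iha s₀ hs₀ t₀ ht₀) (iha s₀' hs₀' t₀' ht₀') heq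
      obtain ⟨hss, htt⟩ := ihc s₀ hs₀ t₀ ht₀ s₀' hs₀' t₀' ht₀' hx
      obtain ⟨hcc, hjj⟩ := euclid_unique (by omega : 0 < u k) hc hc' hy
      subst hss; subst htt; subst hcc; subst hjj
      exact ⟨rfl, rfl⟩

end Stmt15aux

theorem stmt15 (lam k : ℕ) (hlam : 2 ≤ lam) (hk : 1 ≤ k) (u v : ℕ → ℕ)
    (hu : ∀ h < k, 2 ≤ u h) (hv : ∀ h < k, 2 ≤ v h)
    (m : ℕ) (lamt : Fin m → ℕ) (hmono : StrictMono lamt)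
    (hΛ : Set.range lamt = (fun s => lam ^ s) '' Sset u v k) :
    Set.BijOn (fun a : Fin m → ℕ => ∑ i, lamt i * a i)
      {a : Fin m → ℕ | ∀ i, a i ∈ Aset lam (Tset u v k)}
      (Set.Iio (lam ^ (Uprod u k * Uprod v k))) := by
  classical
  have hu1 : ∀ h < k, 1 ≤ u h := fun h hh => le_trans (by norm_num) (hu h hh)
  have hv1 : ∀ h < k, 1 ≤ v h := fun h hh => le_trans (by norm_num) (hv h hh)
  obtain ⟨hbound, hexist, huniq⟩ := Stmt15aux.core u v k hu1 hv1
  set N := Uprod u k * Uprod v k with hNdef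
  have hS0 : (0:ℕ) ∈ Sset u v k := ⟨fun _ => 0, fun h hh => hu1 h hh, by simp⟩
  have hT0 : (0:ℕ) ∈ Tset u v k := ⟨fun _ => 0, fun h hh => hv1 h hh, by simp⟩
  -- the exponents σ of the lamt
  have hsig : ∀ i : Fin m, ∃ s, s ∈ Sset u v k ∧ lam ^ s = lamt i := by
    intro i
    have hmem : lamt i ∈ Set.range lamt := ⟨i, rfl⟩
    rw [hΛ] at hmem
    obtain ⟨s, hs, hse⟩ := hmem
    exact ⟨s, hs, hse⟩
  choose σ hσS hσval using hsig
  have hpowinj : Function.Injective (fun s : ℕ => lam ^ s) := fun a b hab =>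
    Nat.pow_right_injective hlam hab
  have hσinj : Function.Injective σ := by
    intro i j hij
    apply hmono.injective
    rw [← hσval i, ← hσval j, hij]
  have hσsurj : ∀ s ∈ Sset u v k, ∃ i, σ i = s := by
    intro s hs
    have hmem : lam ^ s ∈ Set.range lamt := by rw [hΛ]; exact ⟨s, hs, rfl⟩
    obtain ⟨i, hi⟩ := hmem
    exact ⟨i, hpowinj (by simp only []; rw [hσval i, hi])⟩
  -- T as a finset
  set Tfin : Finset ℕ := (Finset.range N).filter (· ∈ Tset u v k) with hTfindef
  have hTfin : ∀ t, t ∈ Tfin ↔ t ∈ Tset u v k := by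
    intro t
    simp only [hTfindef, Finset.mem_filter, Finset.mem_range]
    exact ⟨fun h => h.2, fun h => ⟨by simpa using hbound 0 hS0 t h, h⟩⟩
  set B : Finset (Fin m × ℕ) := Finset.univ ×ˢ Tfin with hBdef
  set e : Fin m × ℕ → ℕ := fun x => σ x.1 + x.2 with hedef
  have heB : ∀ x ∈ B, e x < N := by
    intro x hx
    obtain ⟨-, hx2⟩ := Finset.mem_product.mp hx
    exact hbound _ (hσS x.1) _ ((hTfin x.2).mp hx2)
  have heinj : ∀ x ∈ B, ∀ y ∈ B, e x = e y → x = y := by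
    intro x hx y hy hxy
    obtain ⟨-, hx2⟩ := Finset.mem_product.mp hx
    obtain ⟨-, hy2⟩ := Finset.mem_product.mp hy
    obtain ⟨h1, h2⟩ := huniq _ (hσS x.1) _ ((hTfin _).mp hx2) _ (hσS y.1) _
      ((hTfin _).mp hy2) hxy
    have : x.1 = y.1 := hσinj h1
    exact Prod.ext this h2
  -- rewrite sums over elements of the Aset
  have key : ∀ a : Fin m → ℕ, (∀ i, a i ∈ Aset lam (Tset u v k)) →
      ∃ δ : Fin m → ℕ → ℕ, (∀ i t, δ i t < lam) ∧
        (∀ i, a i = ∑ t ∈ Tfin, δ i t * lam ^ t) ∧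
        (∑ i, lamt i * a i = ∑ x ∈ B, δ x.1 x.2 * lam ^ (e x)) := by
    intro a ha
    choose δ hδlt hδsupp hδsum using ha
    have hai : ∀ i, a i = ∑ t ∈ Tfin, δ i t * lam ^ t := by
      intro i
      rw [hδsum i]
      exact Finsupp.sum_of_support_subset _
        (fun t ht => (hTfin t).mpr (hδsupp i t (Finsupp.mem_support_iff.mp ht))) _
        (fun t _ => zero_mul _)
    refine ⟨fun i t => δ i t, fun i t => hδlt i t, hai, ?_⟩
    rw [hBdef, Finset.sum_product]
    apply Finset.sum_congr rfl
    intro i _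
    rw [hai i, Finset.mul_sum, ← hσval i]
    apply Finset.sum_congr rfl
    intro t _
    show lam ^ σ i * (δ i t * lam ^ t) = δ i t * lam ^ (σ i + t)
    rw [pow_add]; ring
  refine ⟨?_, ?_, ?_⟩
  · -- MapsTo
    intro a ha
    obtain ⟨δ, hδlt, -, hsum⟩ := key a ha
    simp only [Set.mem_Iio]
    rw [hsum, Stmt15aux.sum_fiber_eq lam B e N heB]
    exact Stmt15aux.sum_digits_lt lam N (by omega) _
      (fun p _ => Stmt15aux.fiber_lt lam (by omega) B e heinj _
        (fun x _ => hδlt x.1 x.2) p)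
  · -- InjOn
    intro a ha a' ha' heq
    obtain ⟨δ, hδlt, hai, hsum⟩ := key a ha
    obtain ⟨δ', hδlt', hai', hsum'⟩ := key a' ha'
    simp only at heq
    have hDsums : ∑ p ∈ Finset.range N, (∑ x ∈ B.filter (fun x => e x = p), δ x.1 x.2) * lam ^ p
        = ∑ p ∈ Finset.range N, (∑ x ∈ B.filter (fun x => e x = p), δ' x.1 x.2) * lam ^ p := by
      rw [← Stmt15aux.sum_fiber_eq lam B e N heB, ← Stmt15aux.sum_fiber_eq lam B e N heB,
        ← hsum, ← hsum']
      exact heq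
    have hD := Stmt15aux.digits_unique lam hlam N _ _
      (fun p _ => Stmt15aux.fiber_lt lam (by omega) B e heinj _ (fun x _ => hδlt x.1 x.2) p)
      (fun p _ => Stmt15aux.fiber_lt lam (by omega) B e heinj _ (fun x _ => hδlt' x.1 x.2) p)
      hDsums
    have hδeq : ∀ x ∈ B, δ x.1 x.2 = δ' x.1 x.2 := by
      intro x hx
      have h1 : B.filter (fun y => e y = e x) = {x} :=
        Stmt15aux.fiber_singleton B e heinj hx
      have h2 := hD (e x) (heB x hx)
      rw [h1, Finset.sum_singleton, Finset.sum_singleton] at h2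
      exact h2
    funext i
    rw [hai i, hai' i]
    apply Finset.sum_congr rfl
    intro t ht
    have hmem : (i, t) ∈ B := by
      rw [hBdef]; exact Finset.mem_product.mpr ⟨Finset.mem_univ i, ht⟩
    have := hδeq (i, t) hmem
    simp only at this
    rw [this]
  · -- SurjOn
    intro n hn
    simp only [Set.mem_Iio] at hn
    set d : ℕ → ℕ := fun p => n / lam ^ p % lam with hddef
    have hdlt : ∀ p, d p < lam := fun p => Nat.mod_lt _ (by omega)
    set δ : Fin m → ℕ →₀ ℕ := fun i =>
      Finsupp.onFinset Tfin (fun t => if t ∈ Tfin then d (σ i + t) else 0)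
        (fun t ht => by by_contra hc; exact ht (if_neg hc)) with hδdef
    have hδapp : ∀ i t, δ i t = if t ∈ Tfin then d (σ i + t) else 0 := by
      intro i t; rfl
    refine ⟨fun i => (δ i).sum (fun t c => c * lam ^ t), ?_, ?_⟩
    · intro i
      refine ⟨δ i, ?_, ?_, rfl⟩
      · intro t
        rw [hδapp]
        split
        · exact hdlt _
        · omega
      · intro t ht
        rw [hδapp] at ht
        by_cases h : t ∈ Tfin
        · exact (hTfin t).mp h
        · exact absurd (if_neg h) ht
    · show ∑ i, lamt i * (δ i).sum (fun t c => c * lam ^ t) = n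
      have hsum_i : ∀ i, (δ i).sum (fun t c => c * lam ^ t)
          = ∑ t ∈ Tfin, d (σ i + t) * lam ^ t := by
        intro i
        have hsub : (δ i).support ⊆ Tfin := by
          intro t ht
          have h1 := Finsupp.mem_support_iff.mp ht
          rw [hδapp] at h1
          by_cases h : t ∈ Tfin
          · exact h
          · exact absurd (if_neg h) h1
        rw [Finsupp.sum_of_support_subset (δ i) hsub (fun t c => c * lam ^ t)
          (fun t _ => zero_mul _)]
        apply Finset.sum_congr rfl
        intro t ht
        rw [hδapp, if_pos ht]
      calc ∑ i, lamt i * (δ i).sum (fun t c => c * lam ^ t)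
          = ∑ x ∈ B, d (e x) * lam ^ (e x) := by
            rw [hBdef, Finset.sum_product]
            apply Finset.sum_congr rfl
            intro i _
            rw [hsum_i i, Finset.mul_sum, ← hσval i]
            apply Finset.sum_congr rfl
            intro t _
            show lam ^ σ i * (d (σ i + t) * lam ^ t) = d (σ i + t) * lam ^ (σ i + t)
            rw [pow_add]; ring
        _ = ∑ p ∈ Finset.range N, (∑ x ∈ B.filter (fun x => e x = p), d (e x)) * lam ^ p :=
            Stmt15aux.sum_fiber_eq lam B e N heB _
        _ = ∑ p ∈ Finset.range N, d p * lam ^ p := by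
            apply Finset.sum_congr rfl
            intro p hp
            obtain ⟨s, hs, t, ht, rfl⟩ := hexist p (Finset.mem_range.mp hp)
            obtain ⟨i, rfl⟩ := hσsurj s hs
            have hxB : (i, t) ∈ B := by
              rw [hBdef]
              exact Finset.mem_product.mpr ⟨Finset.mem_univ _, (hTfin t).mpr ht⟩
            have hfe : e (i, t) = σ i + t := rfl
            have hfil : B.filter (fun y => e y = σ i + t) = {(i, t)} := by
              rw [← hfe]; exact Stmt15aux.fiber_singleton B e heinj hxB
            rw [hfil, Finset.sum_singleton, hfe]
        _ = n := (Stmt15aux.digits_exist lam hlam N n hn).symm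
end
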